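/- Deterministic node selection liveness: in a system of n nodes where each node has energy eᵢ ∈ ℕ and positive step σᵢ ≥ 1, where at each round the node with maximal energy (ties broken by a fixed total order) is selected and has its energy reset to 0 while all others increase by their step, every node is selected infinitely often (equivalently: no node waits forever). -/
import Mathlib


theorem deterministic_node_selection_liveness
    (n : ℕ) (hn : 1 ≤ n) (σ : Fin n → ℕ) (hσ : ∀ i, 1 ≤ σ i)
    (e : ℕ → Fin n → ℕ) (sel : ℕ → Fin n)
    (hmax : ∀ t j, e t j ≤ e t (sel t))
    (htie : ∀ t j, e t j = e t (sel t) → sel t ≤ j)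
    (hreset : ∀ t, e (t + 1) (sel t) = 0)
    (hstep : ∀ t j, j ≠ sel t → e (t + 1) j = e t j + σ j) :
    ∀ (j : Fin n) (t : ℕ), ∃ t' > t, sel t' = j := by
  intro j t
  by_contra hcon
  push_neg at hcon
  -- hcon : ∀ t' > t, sel t' ≠ j
  -- j's energy grows without bound
  have hgrow : ∀ k, k ≤ e (t + 1 + k) j := by
    intro k
    induction k with
    | zero => exact Nat.zero_le _
    | succ k ih =>
      have hne : j ≠ sel (t + 1 + k) := by
        intro h
        exact hcon (t + 1 + k) (by omega) h.symm
      have hs := hstep (t + 1 + k) j hne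
      have h1 : t + 1 + (k + 1) = (t + 1 + k) + 1 := by ring
      rw [h1, hs]
      have := hσ j
      omega
  -- general upper bound on energy growth
  have hub : ∀ (i : Fin n) (u m : ℕ), e (u + m) i ≤ e u i + m * σ i := by
    intro i u m
    induction m with
    | zero => simp
    | succ m ih =>
      have h1 : u + (m + 1) = (u + m) + 1 := by ring
      by_cases h : i = sel (u + m)
      · have hr := hreset (u + m)
        rw [← h] at hr
        rw [h1, hr]
        exact Nat.zero_le _
      · have hs := hstep (u + m) i h
        rw [h1, hs]
        calc e (u + m) i + σ i ≤ e u i + m * σ i + σ i := by omega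
          _ = e u i + (m + 1) * σ i := by ring
  set S := Finset.univ.sup σ with hS
  have hσS : ∀ i, σ i ≤ S := fun i => Finset.le_sup (Finset.mem_univ i)
  set T := t + n * S + 1 with hT
  have hcard : Fintype.card (Fin n) < Fintype.card (Fin (n + 1)) := by simp
  obtain ⟨a, b, hlt, heq⟩ :
      ∃ a b : Fin (n + 1), a.val < b.val ∧ sel (T + a.val) = sel (T + b.val) := by
    obtain ⟨a, b, hab, hfab⟩ :=
      Fintype.exists_ne_map_eq_of_card_lt (fun k : Fin (n + 1) => sel (T + k.val)) hcard
    have hne : a.val ≠ b.val := fun hh => hab (Fin.val_injective hh)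
    rcases Nat.lt_or_ge a.val b.val with h | h
    · exact ⟨a, b, h, hfab⟩
    · exact ⟨b, a, by omega, hfab.symm⟩
  set i := sel (T + a.val) with hi
  -- lower bound: e (T + b.val) j ≥ n*S + b.val
  have hlow : n * S + b.val ≤ e (T + b.val) j := by
    have h1 : T + b.val = t + 1 + (n * S + b.val) := by omega
    rw [h1]
    exact hgrow (n * S + b.val)
  -- upper bound on e (T + b.val) i
  have hup : e (T + b.val) i ≤ (b.val - a.val - 1) * σ i := by
    have h1 : T + b.val = (T + a.val + 1) + (b.val - a.val - 1) := by omega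
    have hr : e (T + a.val + 1) i = 0 := hreset (T + a.val)
    have := hub i (T + a.val + 1) (b.val - a.val - 1)
    rw [hr] at this
    rw [h1]
    omega
  have hprod : (b.val - a.val - 1) * σ i ≤ n * S := by
    have hb : b.val - a.val - 1 ≤ n := by
      have := b.isLt
      omega
    exact Nat.mul_le_mul hb (hσS i)
  have hmax' : e (T + b.val) j ≤ e (T + b.val) i := by
    have := hmax (T + b.val) j
    rwa [← heq] at this
  have hb1 : 1 ≤ b.val := by omega
  omega
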